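/- Let π be a finitely generated free group, K ⊇ ℚ, and θ: π → T̂ a group-like expansion inducing the isomorphism θ: K̂π ≅ T̂. Let N be the cyclic symmetrization on T̂. Then for every n ≥ 1, an element u ∈ Kπ satisfies N(θ(u)) ∈ N(T̂ₙ) if and only if |u| ∈ |K·1 + (Iπ)ⁿ|, where |·| denotes the projection to the K-module spanned by conjugacy classes of π (i.e. Kπ modulo the K-span of elements xy − yx). -/

import Mathlib

/-! Let `π` be a finitely generated free group, `K ⊇ ℚ` a commutative ring, and
`H = π^{ab} ⊗ K`.  We model the completed tensor algebra `T̂ = ∏ₘ H^{⊗m}`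
concretely: an element is a function assigning to each word in the alphabet `ι`
(the basis of `H` given by the free generators of `π`) its coefficient.
Multiplication is convolution over splittings of words, the coproduct is given
dually by shuffles, and the filtration is `T̂ₚ = ∏_{m ≥ p} H^{⊗m}`.  The
projection `|·| : Kπ → Kπ̂` onto the free module spanned by conjugacy classes
is the quotient by the `K`-span of the elements `xy − yx`, `x, y ∈ π`. -/

/-- The completed tensor algebra on the free module with basis `ι`. -/
abbrev NCSeries (ι K : Type*) := List ι → K

variable {ι K : Type*} [CommRing K]

/-- The unit of `T̂`. -/
def oneNC : NCSeries ι K := fun w =>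
  match w with
  | [] => 1
  | _ => 0

/-- The multiplication of `T̂`. -/
def mulNC (f g : NCSeries ι K) : NCSeries ι K := fun w =>
  ∑ k ∈ Finset.range (w.length + 1), f (w.take k) * g (w.drop k)

/-- The cyclic symmetrization `N : T̂ → T̂`, with `N = 0` on `H^{⊗0}` and
`N(X₁⋯Xₙ) = Σᵢ Xᵢ⋯XₙX₁⋯X_{i−1}` on `H^{⊗n}`. -/
def cyclicN (f : NCSeries ι K) : NCSeries ι K := fun w =>
  match w with
  | [] => 0
  | w => ∑ i ∈ Finset.range w.length, f (w.rotate i)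

/-- Merge two words `u`, `v` according to a bit mask (`true` positions are
filled from `u`, `false` positions from `v`). -/
def mergeBits : List Bool → List ι → List ι → List ι
  | [], _, _ => []
  | true :: bs, a :: u, v => a :: mergeBits bs u v
  | true :: _, [], _ => []
  | false :: bs, u, a :: v => a :: mergeBits bs u v
  | false :: _, _, [] => []

/-- The coproduct `Δ : T̂ → T̂ ⊗̂ T̂`, written dually on coefficient functions
via shuffles. -/
def deltaNC (f : NCSeries ι K) (u v : List ι) : K :=
  ∑ g : Fin (u.length + v.length) → Bool,
    if (List.ofFn g).count true = u.length then f (mergeBits (List.ofFn g) u v)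
    else 0

/-- An element of `T̂` is group-like if `ε(u) = 1` and `Δu = u ⊗̂ u`. -/
def IsGroupLikeNC (u : NCSeries ι K) : Prop :=
  u [] = 1 ∧ ∀ v w : List ι, deltaNC u v w = u v * u w

/-- The exponent sum of a word of the free group at the generator `i`. -/
def expSum [DecidableEq ι] (i : ι) : FreeGroup ι →* Multiplicative ℤ :=
  FreeGroup.lift fun j => Multiplicative.ofAdd (if j = i then (1 : ℤ) else 0)

/-- A group-like expansion `θ` of the free group (Massuyeau). -/
def IsGroupLikeExpansion [DecidableEq ι] (θ : FreeGroup ι → NCSeries ι K) : Prop :=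
  (∀ x y : FreeGroup ι, θ (x * y) = mulNC (θ x) (θ y)) ∧
  (∀ x : FreeGroup ι, IsGroupLikeNC (θ x)) ∧
  (∀ (x : FreeGroup ι) (i : ι), θ x [i] = ((Multiplicative.toAdd (expSum i x) : ℤ) : K))

/-- The `K`-linear extension `Kπ → T̂` of a map `π → T̂`. -/
noncomputable def linExt (θ : FreeGroup ι → NCSeries ι K)
    (u : MonoidAlgebra K (FreeGroup ι)) : NCSeries ι K := fun w =>
  Finsupp.sum u.coeff fun x c => c * θ x w

/-- The `n`-th power `(Iπ)ⁿ` of the augmentation ideal of the group ring `Kπ`,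
realized as the `K`-span of products `(x₁−1)⋯(xₙ−1)`. -/
noncomputable def augIdealPow (n : ℕ) : Submodule K (MonoidAlgebra K (FreeGroup ι)) :=
  Submodule.span K {u : MonoidAlgebra K (FreeGroup ι) | ∃ l : List (FreeGroup ι),
    l.length = n ∧ u = (l.map (fun x => MonoidAlgebra.of K (FreeGroup ι) x - 1)).prod}

/-- The `K`-span of the elements `xy − yx` (`x, y ∈ π`) of the group ring; the
quotient by it is the free module on the conjugacy classes of `π`, and two
elements of `Kπ` have the same image `|·|` there iff their difference lies in
this span. -/
noncomputable def conjugationSpan (ι K : Type*) [CommRing K] :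
    Submodule K (MonoidAlgebra K (FreeGroup ι)) :=
  Submodule.span K {z : MonoidAlgebra K (FreeGroup ι) | ∃ x y : FreeGroup ι,
    z = MonoidAlgebra.of K (FreeGroup ι) x * MonoidAlgebra.of K (FreeGroup ι) y
      - MonoidAlgebra.of K (FreeGroup ι) y * MonoidAlgebra.of K (FreeGroup ι) x}

/-! `θ̄` is multiplicative and `N(fg) = N(gf)`, so `N ∘ θ̄` kills `K·1` and every `xy − yx`,
while `θ̄` maps `(Iπ)ⁿ` into `T̂ₙ`; this gives one direction. Conversely, modulo `(Iπ)^{d+1}` the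
ideal `(Iπ)^d` is spanned by the products `P_w = (x_{w₁} − 1)⋯(x_{w_d} − 1)`, and `θ̄(P_w)` is the
word `w` plus terms of higher degree. Peeling off the degrees `d = 1, …, n − 1` one at a time,
the degree-`d` part `∑ l_w P_w` of `u` must satisfy `∑ᵢ l_{rotᵢ v} = 0` for every word `v` of
length `d`. Since `P_w ≡ P_{rot w}` modulo the `xy − yx` and `d` is invertible in `K ⊇ ℚ`, such
a combination is itself a combination of the `xy − yx`. -/

open Finset

section NCSeries

/-- The filtration `T̂ₙ = ∏_{m ≥ n} H^{⊗m}`. -/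
def filtrationNC (n : ℕ) : Submodule K (NCSeries ι K) where
  carrier := {f | ∀ w : List ι, w.length < n → f w = 0}
  add_mem' hf hg w hw := by simp [hf w hw, hg w hw]
  zero_mem' _ _ := rfl
  smul_mem' c f hf w hw := by simp [hf w hw]

lemma filtrationNC_anti {m n : ℕ} (h : m ≤ n) :
    filtrationNC (ι := ι) (K := K) n ≤ filtrationNC m :=
  fun _ hf w hw => hf w (hw.trans_le h)

lemma mulNC_mem_filtrationNC {a b : ℕ} {f g : NCSeries ι K} (hf : f ∈ filtrationNC a)
    (hg : g ∈ filtrationNC b) : mulNC f g ∈ filtrationNC (a + b) := by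
  intro w hw
  refine sum_eq_zero fun k _ => ?_
  rcases lt_or_ge (w.take k).length a with h | h
  · rw [hf _ h, zero_mul]
  · rw [hg _ (by simp only [List.length_take, List.length_drop] at h ⊢; omega), mul_zero]

lemma mulNC_add_left (f g h : NCSeries ι K) : mulNC (f + g) h = mulNC f h + mulNC g h := by
  funext w; simp [mulNC, add_mul, sum_add_distrib]

lemma mulNC_add_right (f g h : NCSeries ι K) : mulNC f (g + h) = mulNC f g + mulNC f h := by
  funext w; simp [mulNC, mul_add, sum_add_distrib]

lemma mulNC_smul_left (c : K) (f g : NCSeries ι K) : mulNC (c • f) g = c • mulNC f g := by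
  funext w; simp [mulNC, mul_sum, mul_assoc]

lemma mulNC_smul_right (c : K) (f g : NCSeries ι K) : mulNC f (c • g) = c • mulNC f g := by
  funext w; simp [mulNC, mul_sum, mul_left_comm]

lemma mulNC_cons_of_mem_filtrationNC {f g : NCSeries ι K} (hf : f [] = 0) (a : ι) (s : List ι)
    (hg : g ∈ filtrationNC s.length) : mulNC f g (a :: s) = f [a] * g s := by
  rw [mulNC, List.length_cons, sum_range_succ', sum_range_succ']
  have hlong : ∑ k ∈ range s.length, f (a :: s.take (k + 1)) * g (s.drop (k + 1)) = 0 :=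
    sum_eq_zero fun k hk => by
      rw [hg _ (by simp only [mem_range] at hk; simp; omega), mul_zero]
  simp [hlong, hf]

@[simp]
lemma oneNC_nil : (oneNC ([] : List ι) : K) = 1 := rfl

@[simp]
lemma oneNC_cons (a : ι) (s : List ι) : (oneNC (a :: s) : K) = 0 := rfl

lemma eq_oneNC_of_mulNC_self {f : NCSeries ι K} (hff : mulNC f f = f) (h0 : f [] = 1) :
    f = oneNC := by
  funext w
  induction hw : w.length using Nat.strong_induction_on generalizing w with
  | _ L ih =>
  rcases w with _ | ⟨a, s⟩
  · exact h0
  have hmid : ∑ k ∈ range s.length,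
      f ((a :: s).take (k + 1)) * f ((a :: s).drop (k + 1)) = 0 :=
    sum_eq_zero fun k hk => by
      have hlt : ((a :: s).take (k + 1)).length < L := by
        simp only [mem_range] at hk; simp [← hw]; omega
      rw [ih _ hlt _ rfl, List.take_succ_cons, oneNC_cons, zero_mul]
  have hcoef := congrFun hff (a :: s)
  rw [mulNC, List.length_cons, sum_range_succ, sum_range_succ', hmid] at hcoef
  simp only [List.take_zero, List.drop_zero, List.take_succ_cons, List.drop_succ_cons,
    List.take_length, List.drop_length, h0] at hcoef
  change f (a :: s) = 0
  linear_combination hcoef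

lemma cyclicN_oneNC : cyclicN (oneNC : NCSeries ι K) = 0 := by
  funext w
  cases w with
  | nil => rfl
  | cons a t => exact sum_eq_zero fun i _ => by cases h : (a :: t).rotate i <;> simp_all [oneNC]

lemma cyclicN_apply_of_ne_nil (f : NCSeries ι K) {w : List ι} (hw : w ≠ []) :
    cyclicN f w = ∑ i ∈ range w.length, f (w.rotate i) := by
  cases w
  · exact absurd rfl hw
  · rfl

def cyclicNₗ : NCSeries ι K →ₗ[K] NCSeries ι K where
  toFun := cyclicN
  map_add' f g := by funext w; cases w <;> simp [cyclicN, sum_add_distrib]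
  map_smul' c f := by funext w; cases w <;> simp [cyclicN, mul_sum]

lemma cyclicNₗ_apply (f : NCSeries ι K) : cyclicNₗ f = cyclicN f := rfl

lemma cyclicN_mem_filtrationNC {n : ℕ} {f : NCSeries ι K} (hf : f ∈ filtrationNC n) :
    cyclicN f ∈ filtrationNC n := by
  rintro (_ | ⟨a, t⟩) hw
  · rfl
  · exact sum_eq_zero fun i _ => hf _ (by rwa [List.length_rotate])

/-- Cutting the `i`-th rotation of `w` at `k` and cutting its `((i + k) mod |w|)`-th rotation
at `|w| - k` give the same two pieces, swapped. -/
lemma cyclicN_mulNC_comm (f g : NCSeries ι K) : cyclicN (mulNC f g) = cyclicN (mulNC g f) := by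
  funext w
  rcases w with _ | ⟨a, t⟩
  · rfl
  set w := a :: t
  set L := w.length
  have hL : 0 < L := by simp [L, w]
  change ∑ i ∈ range L, mulNC f g (w.rotate i) = ∑ i ∈ range L, mulNC g f (w.rotate i)
  simp only [mulNC, List.length_rotate]
  rw [← sum_product', ← sum_product']
  let σ : ℕ × ℕ → ℕ × ℕ := fun p => ((p.1 + p.2) % L, L - p.2)
  have hσ_mem : ∀ p ∈ range L ×ˢ range (L + 1), σ p ∈ range L ×ˢ range (L + 1) := by
    rintro ⟨i, k⟩ _
    simp only [σ, mem_product, mem_range]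
    exact ⟨Nat.mod_lt _ hL, by omega⟩
  have hσσ : ∀ p ∈ range L ×ˢ range (L + 1), σ (σ p) = p := by
    rintro ⟨i, k⟩ hik
    simp only [mem_product, mem_range] at hik
    simp only [σ, Prod.mk.injEq]
    constructor
    · rw [Nat.mod_add_mod, show i + k + (L - k) = i + L by omega, Nat.add_mod_right,
        Nat.mod_eq_of_lt hik.1]
    · omega
  refine sum_nbij' σ σ hσ_mem hσ_mem hσσ hσσ ?_
  rintro ⟨i, k⟩ hik
  simp only [mem_product, mem_range] at hik
  have hk : k ≤ (w.rotate i).length := by rw [List.length_rotate]; omega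
  have hrot : w.rotate ((i + k) % L) = (w.rotate i).drop k ++ (w.rotate i).take k := by
    rw [List.rotate_mod, ← List.rotate_rotate, List.rotate_eq_drop_append_take hk]
  have hdrop : ((w.rotate i).drop k).length = L - k := by simp [L]
  simp only [σ, hrot, ← hdrop, List.take_left, List.drop_left]
  exact mul_comm _ _

end NCSeries

section GroupRing

open MonoidAlgebra Submodule

/-- `P_w = (x_{w₁} − 1)⋯(x_{w_k} − 1)`, where `x_i` are the free generators. -/
noncomputable def augProd (w : List ι) : MonoidAlgebra K (FreeGroup ι) :=
  (w.map fun i => of K (FreeGroup ι) (FreeGroup.of i) - 1).prod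

@[simp]
lemma augProd_nil : augProd ([] : List ι) = (1 : MonoidAlgebra K (FreeGroup ι)) := rfl

lemma augProd_cons (i : ι) (w : List ι) :
    augProd (i :: w) = (of K (FreeGroup ι) (FreeGroup.of i) - 1) * augProd w := by
  simp [augProd]

lemma augProd_append (u v : List ι) :
    augProd (u ++ v) = (augProd u : MonoidAlgebra K (FreeGroup ι)) * augProd v := by
  simp [augProd]

lemma augProd_mem_augIdealPow (w : List ι) :
    (augProd w : MonoidAlgebra K (FreeGroup ι)) ∈ augIdealPow w.length :=
  subset_span ⟨w.map FreeGroup.of, by simp, by simp [augProd, Function.comp_def]⟩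

lemma augIdealPow_add (a b : ℕ) :
    augIdealPow (ι := ι) (K := K) (a + b) = augIdealPow a * augIdealPow b := by
  rw [augIdealPow, augIdealPow, augIdealPow, span_mul_span]
  refine le_antisymm (span_le.2 ?_) (span_le.2 ?_)
  · rintro _ ⟨l, hl, rfl⟩
    refine subset_span ⟨_, ⟨l.take a, by simp; omega, rfl⟩, _, ⟨l.drop a, by simp; omega, rfl⟩, ?_⟩
    dsimp only
    rw [← List.prod_append, ← List.map_append, List.take_append_drop]
  · rintro _ ⟨_, ⟨l₁, h₁, rfl⟩, _, ⟨l₂, h₂, rfl⟩, rfl⟩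
    exact subset_span ⟨l₁ ++ l₂, by simp [h₁, h₂], by simp⟩

noncomputable def augProdSpan (d : ℕ) : Submodule K (MonoidAlgebra K (FreeGroup ι)) :=
  span K (augProd '' {w : List ι | w.length = d})

lemma augProdSpan_le_augIdealPow (d : ℕ) :
    augProdSpan (ι := ι) (K := K) d ≤ augIdealPow d :=
  span_le.2 <| by rintro _ ⟨w, rfl, rfl⟩; exact augProd_mem_augIdealPow w

lemma augProdSpan_mul_le (a b : ℕ) :
    augProdSpan (ι := ι) (K := K) a * augProdSpan b ≤ augProdSpan (a + b) := by
  rw [augProdSpan, augProdSpan, span_mul_span]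
  refine span_le.2 ?_
  rintro _ ⟨_, ⟨u, rfl, rfl⟩, _, ⟨v, rfl, rfl⟩, rfl⟩
  exact subset_span ⟨u ++ v, by simp, augProd_append u v⟩

lemma augIdealPow_one_le_augProdSpan_one_sup :
    augIdealPow (ι := ι) (K := K) 1 ≤ augProdSpan 1 ⊔ augIdealPow 2 := by
  refine span_le.2 ?_
  rintro _ ⟨l, hl, rfl⟩
  obtain ⟨x, rfl⟩ := List.length_eq_one_iff.1 hl
  rw [SetLike.mem_coe, List.map_singleton, List.prod_singleton]
  clear hl
  have hprod : ∀ y z : FreeGroup ι,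
      (of K (FreeGroup ι) y - 1) * (of K (FreeGroup ι) z - 1) ∈ augIdealPow (ι := ι) 2 :=
    fun y z => subset_span ⟨[y, z], rfl, by simp⟩
  induction x using FreeGroup.induction_on with
  | C1 => rw [map_one, sub_self]; exact zero_mem _
  | of i => exact mem_sup_left (subset_span ⟨[i], rfl, by simp [augProd]⟩)
  | inv_of i ih =>
    set p := of K (FreeGroup ι) (FreeGroup.of i)
    set q := of K (FreeGroup ι) (FreeGroup.of i)⁻¹
    have hqp : q * p = 1 := by rw [← map_mul, inv_mul_cancel, map_one]
    have hinv : q - 1 = -(p - 1) - (q - 1) * (p - 1) := by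
      calc q - 1 = -(p - 1) - (q - 1) * (p - 1) + (q * p - 1) := by noncomm_ring
        _ = _ := by rw [hqp, sub_self, add_zero]
    rw [hinv]
    exact sub_mem (neg_mem ih) (mem_sup_right (hprod _ _))
  | mul y z hy hz =>
    have hmul : of K (FreeGroup ι) (y * z) - 1 = (of K (FreeGroup ι) y - 1)
        + (of K (FreeGroup ι) z - 1) + (of K (FreeGroup ι) y - 1) * (of K (FreeGroup ι) z - 1) := by
      rw [map_mul]; noncomm_ring
    rw [hmul]
    exact add_mem (add_mem hy hz) (mem_sup_right (hprod _ _))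

lemma augIdealPow_le_augProdSpan_sup (d : ℕ) :
    augIdealPow (ι := ι) (K := K) d ≤ augProdSpan d ⊔ augIdealPow (d + 1) := by
  induction d with
  | zero =>
    refine le_sup_of_le_left (span_le.2 ?_)
    rintro _ ⟨l, hl, rfl⟩
    exact subset_span ⟨[], rfl, by simp [List.length_eq_zero_iff.1 hl]⟩
  | succ d ih =>
    have hB : augProdSpan 1 * augProdSpan d ≤ augProdSpan (ι := ι) (K := K) (d + 1) := by
      simpa [add_comm] using augProdSpan_mul_le 1 d
    have hA :
        augProdSpan 1 * augIdealPow (d + 1) ≤ augIdealPow (ι := ι) (K := K) (d + 1 + 1) := by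
      refine (mul_le_mul' (augProdSpan_le_augIdealPow 1) le_rfl).trans ?_
      rw [← augIdealPow_add, add_comm]
    calc augIdealPow (ι := ι) (K := K) (d + 1) = augIdealPow 1 * augIdealPow d := by
          rw [add_comm, augIdealPow_add]
      _ ≤ (augProdSpan 1 ⊔ augIdealPow 2) * augIdealPow d :=
        mul_le_mul' augIdealPow_one_le_augProdSpan_one_sup le_rfl
      _ = augProdSpan 1 * augIdealPow d ⊔ augIdealPow (d + 1 + 1) := by
        rw [Submodule.sup_mul, ← augIdealPow_add, add_comm 2 d]
      _ ≤ augProdSpan 1 * (augProdSpan d ⊔ augIdealPow (d + 1)) ⊔ augIdealPow (d + 1 + 1) :=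
        sup_le_sup_right (mul_le_mul' le_rfl ih) _
      _ ≤ augProdSpan (d + 1) ⊔ augIdealPow (d + 1 + 1) := by
        rw [Submodule.mul_sup]
        exact sup_le (sup_le (le_sup_of_le_left hB) (le_sup_of_le_right hA)) le_sup_right

lemma mem_span_one_sup_augIdealPow_one (u : MonoidAlgebra K (FreeGroup ι)) :
    u ∈ span K {1} ⊔ augIdealPow 1 := by
  induction u using MonoidAlgebra.induction_on with
  | of x =>
    rw [← add_sub_cancel 1 (of K (FreeGroup ι) x)]
    exact add_mem (mem_sup_left (mem_span_singleton_self 1))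
      (mem_sup_right (subset_span ⟨[x], rfl, by simp⟩))
  | add u v hu hv => exact add_mem hu hv
  | smul c u hu => exact smul_mem _ c hu

lemma mul_sub_mul_mem_conjugationSpan (a b : MonoidAlgebra K (FreeGroup ι)) :
    a * b - b * a ∈ conjugationSpan ι K := by
  induction a using MonoidAlgebra.induction_on with
  | of x =>
    induction b using MonoidAlgebra.induction_on with
    | of y => exact subset_span ⟨x, y, rfl⟩
    | add u v hu hv => simpa [mul_add, add_mul, add_sub_add_comm] using add_mem hu hv
    | smul c u hu => simpa [smul_sub] using smul_mem _ c hu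
  | add u v hu hv => simpa [mul_add, add_mul, add_sub_add_comm] using add_mem hu hv
  | smul c u hu => simpa [smul_sub] using smul_mem _ c hu

lemma augProd_sub_augProd_rotate_mem_conjugationSpan (w : List ι) {j : ℕ} (hj : j ≤ w.length) :
    (augProd w : MonoidAlgebra K (FreeGroup ι)) - augProd (w.rotate j) ∈ conjugationSpan ι K := by
  have hsplit : (augProd w : MonoidAlgebra K (FreeGroup ι))
      = augProd (w.take j) * augProd (w.drop j) := by
    rw [← augProd_append, List.take_append_drop]
  rw [hsplit, List.rotate_eq_drop_append_take hj, augProd_append]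
  exact mul_sub_mul_mem_conjugationSpan _ _

end GroupRing

section Averaging

open MonoidAlgebra Submodule

noncomputable def wordsOfLength (ι : Type*) [Finite ι] (d : ℕ) : Finset (List ι) :=
  (List.finite_length_eq ι d).toFinset

@[simp]
lemma mem_wordsOfLength [Finite ι] {d : ℕ} {w : List ι} : w ∈ wordsOfLength ι d ↔ w.length = d :=
  Set.Finite.mem_toFinset _

lemma sum_wordsOfLength_rotate [Finite ι] {M : Type*} [AddCommMonoid M] {d i : ℕ} (hi : i ≤ d)
    (f : List ι → M) : ∑ w ∈ wordsOfLength ι d, f (w.rotate i) = ∑ w ∈ wordsOfLength ι d, f w := by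
  have hinv : ∀ j k, j + k = d → ∀ w ∈ wordsOfLength ι d, (w.rotate j).rotate k = w := by
    intro j k hjk w hw
    rw [List.rotate_rotate, hjk, ← mem_wordsOfLength.1 hw, List.rotate_length]
  refine sum_nbij' (·.rotate i) (·.rotate (d - i)) (by simp) (by simp) (hinv _ _ (by omega))
    (hinv _ _ (by omega)) fun _ _ => rfl

/-- Averaging over rotations: `P_w ≡ P_{rot_i w}` modulo commutators, and `d` is invertible. -/
lemma sum_smul_augProd_mem_conjugationSpan [Finite ι] [Algebra ℚ K] {d : ℕ} (hd : 0 < d)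
    (l : List ι → K) (hl : ∀ v : List ι, v.length = d → ∑ i ∈ range d, l (v.rotate i) = 0) :
    ∑ w ∈ wordsOfLength ι d, l w • augProd w ∈ conjugationSpan ι K := by
  set y := ∑ w ∈ wordsOfLength ι d, l w • (augProd w : MonoidAlgebra K (FreeGroup ι))
  have hdy : (d : K) • y = -∑ i ∈ range d, ∑ w ∈ wordsOfLength ι d,
      l (w.rotate i) • (augProd w - augProd (w.rotate i)) := by
    calc (d : K) • y = ∑ i ∈ range d, y := by rw [sum_const, card_range, Nat.cast_smul_eq_nsmul]
      _ = ∑ i ∈ range d, ∑ w ∈ wordsOfLength ι d,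
          l (w.rotate i) • (augProd (w.rotate i) : MonoidAlgebra K (FreeGroup ι)) :=
          sum_congr rfl fun i hi =>
            (sum_wordsOfLength_rotate (mem_range.1 hi).le (fun w => l w • augProd w)).symm
      _ = (∑ w ∈ wordsOfLength ι d, (∑ i ∈ range d, l (w.rotate i)) • augProd w)
          - ∑ i ∈ range d, ∑ w ∈ wordsOfLength ι d,
            l (w.rotate i) • (augProd w - augProd (w.rotate i)) := by
          simp only [smul_sub, sum_sub_distrib, sum_smul]
          rw [sum_comm (s := wordsOfLength ι d)]
          abel
      _ = _ := by
          rw [sum_eq_zero fun w hw => by rw [hl w (mem_wordsOfLength.1 hw), zero_smul], zero_sub]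
  have hunit : IsUnit (d : K) := by
    simpa using (IsUnit.mk0 (d : ℚ) (by positivity)).map (algebraMap ℚ K)
  rw [← smul_mem_iff_of_isUnit _ hunit, hdy]
  exact neg_mem <| sum_mem fun i hi => sum_mem fun w hw => smul_mem _ _ <|
    augProd_sub_augProd_rotate_mem_conjugationSpan w
      ((mem_range.1 hi).le.trans (mem_wordsOfLength.1 hw).ge)

end Averaging

section Expansion

open MonoidAlgebra Submodule

variable (θ : FreeGroup ι → NCSeries ι K)

noncomputable def linExtₗ : MonoidAlgebra K (FreeGroup ι) →ₗ[K] NCSeries ι K :=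
  Finsupp.linearCombination K θ ∘ₗ (coeffLinearEquiv K).toLinearMap

lemma linExtₗ_apply (u : MonoidAlgebra K (FreeGroup ι)) : linExtₗ θ u = linExt θ u := by
  funext w
  simp [linExtₗ, linExt, Finsupp.linearCombination_apply, Finsupp.sum]

lemma linExtₗ_of (x : FreeGroup ι) : linExtₗ θ (of K (FreeGroup ι) x) = θ x := by
  simp [linExtₗ]

lemma linExtₗ_mul (hm : ∀ x y : FreeGroup ι, θ (x * y) = mulNC (θ x) (θ y))
    (u v : MonoidAlgebra K (FreeGroup ι)) :
    linExtₗ θ (u * v) = mulNC (linExtₗ θ u) (linExtₗ θ v) := by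
  induction u using MonoidAlgebra.induction_on with
  | of x =>
    induction v using MonoidAlgebra.induction_on with
    | of y => rw [← map_mul, linExtₗ_of, linExtₗ_of, linExtₗ_of, hm]
    | add v v' hv hv' => rw [mul_add, map_add, hv, hv', map_add, mulNC_add_right]
    | smul c v hv => rw [mul_smul_comm, map_smul, hv, map_smul, mulNC_smul_right]
  | add u u' hu hu' => rw [add_mul, map_add, hu, hu', map_add, mulNC_add_left]
  | smul c u hu => rw [smul_mul_assoc, map_smul, hu, map_smul, mulNC_smul_left]

lemma linExtₗ_one (h1 : θ 1 = oneNC) :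
    linExtₗ θ (1 : MonoidAlgebra K (FreeGroup ι)) = oneNC := by
  rw [← map_one (of K (FreeGroup ι)), linExtₗ_of, h1]

lemma linExtₗ_of_sub_one_nil (h1 : θ 1 = oneNC) (hε : ∀ x, θ x [] = 1) (x : FreeGroup ι) :
    linExtₗ θ (of K (FreeGroup ι) x - 1) [] = 0 := by
  rw [map_sub, linExtₗ_of, linExtₗ_one θ h1, Pi.sub_apply, hε, oneNC_nil, sub_self]

lemma augIdealPow_le_comap_filtrationNC
    (hm : ∀ x y : FreeGroup ι, θ (x * y) = mulNC (θ x) (θ y)) (h1 : θ 1 = oneNC)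
    (hε : ∀ x, θ x [] = 1) (n : ℕ) :
    augIdealPow n ≤ (filtrationNC n).comap (linExtₗ θ) := by
  refine span_le.2 ?_
  rintro _ ⟨l, rfl, rfl⟩
  induction l with
  | nil => exact fun w hw => absurd hw (Nat.not_lt_zero _)
  | cons x t ih =>
    rw [SetLike.mem_coe, mem_comap, List.map_cons, List.prod_cons, linExtₗ_mul θ hm,
      List.length_cons, add_comm]
    refine mulNC_mem_filtrationNC ?_ ih
    rintro (_ | _) hw
    · exact linExtₗ_of_sub_one_nil θ h1 hε x
    · simp at hw

lemma span_one_sup_conjugationSpan_le_ker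
    (hm : ∀ x y : FreeGroup ι, θ (x * y) = mulNC (θ x) (θ y)) (h1 : θ 1 = oneNC) :
    span K {1} ⊔ conjugationSpan ι K ≤ LinearMap.ker (cyclicNₗ ∘ₗ linExtₗ θ) := by
  refine sup_le ((span_singleton_le_iff_mem _ _).2 ?_) (span_le.2 ?_)
  · simp [linExtₗ_one θ h1, cyclicNₗ_apply, cyclicN_oneNC]
  · rintro _ ⟨x, y, rfl⟩
    rw [SetLike.mem_coe, LinearMap.mem_ker, LinearMap.comp_apply, map_sub, linExtₗ_mul θ hm,
      linExtₗ_mul θ hm, map_sub, cyclicNₗ_apply, cyclicNₗ_apply, cyclicN_mulNC_comm, sub_self]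

/-- An expansion of the free group in Massuyeau's sense: a multiplicative map with
`θ(x) = 1 + [x] + (terms of degree ≥ 2)`. -/
structure IsExpansion [DecidableEq ι] : Prop where
  map_mul : ∀ x y : FreeGroup ι, θ (x * y) = mulNC (θ x) (θ y)
  apply_nil : ∀ x : FreeGroup ι, θ x [] = 1
  apply_singleton :
    ∀ (x : FreeGroup ι) (i : ι), θ x [i] = ((Multiplicative.toAdd (expSum i x) : ℤ) : K)

variable {θ} [DecidableEq ι]

lemma IsGroupLikeExpansion.isExpansion (hθ : IsGroupLikeExpansion θ) : IsExpansion θ :=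
  ⟨hθ.1, fun x => (hθ.2.1 x).1, hθ.2.2⟩

lemma IsExpansion.map_one (hθ : IsExpansion θ) : θ 1 = oneNC :=
  eq_oneNC_of_mulNC_self (by rw [← hθ.map_mul, mul_one]) (hθ.apply_nil 1)

lemma IsExpansion.linExtₗ_augProd_apply (hθ : IsExpansion θ) {w w' : List ι}
    (h : w'.length ≤ w.length) : linExtₗ θ (augProd w) w' = if w' = w then 1 else 0 := by
  induction w generalizing w' with
  | nil =>
    rw [List.length_eq_zero_iff.1 (Nat.le_zero.1 h)]
    simp [linExtₗ_one θ hθ.map_one]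
  | cons i t ih =>
    have hq : ∀ j, linExtₗ θ (of K (FreeGroup ι) (FreeGroup.of i) - 1) [j]
        = if j = i then 1 else 0 := by
      intro j
      rw [map_sub, linExtₗ_of, linExtₗ_one θ hθ.map_one, Pi.sub_apply, hθ.apply_singleton,
        oneNC_cons, sub_zero]
      by_cases hji : j = i
      · simp [expSum, hji]
      · simp [expSum, hji, Ne.symm hji]
    have hq0 := linExtₗ_of_sub_one_nil θ hθ.map_one hθ.apply_nil (FreeGroup.of i)
    rw [augProd_cons, linExtₗ_mul θ hθ.map_mul]
    rcases w' with _ | ⟨a, s⟩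
    · simp [mulNC, -MonoidAlgebra.of_apply, hq0]
    · have hs : s.length ≤ t.length := by simpa using h
      have hPt : linExtₗ θ (augProd t) ∈ filtrationNC s.length :=
        filtrationNC_anti hs (augIdealPow_le_comap_filtrationNC θ hθ.map_mul hθ.map_one
          hθ.apply_nil _ (augProd_mem_augIdealPow t))
      rw [mulNC_cons_of_mem_filtrationNC hq0 a s hPt, hq, ih hs]
      split_ifs <;> simp_all

lemma IsExpansion.mem_conjugationSpan_of_cyclicN_eq_zero [Finite ι] [Algebra ℚ K]
    (hθ : IsExpansion θ) {d : ℕ} (hd : 0 < d) {y : MonoidAlgebra K (FreeGroup ι)}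
    (hy : y ∈ augProdSpan d) (hN : ∀ v : List ι, v.length = d → cyclicN (linExtₗ θ y) v = 0) :
    y ∈ conjugationSpan ι K := by
  rw [augProdSpan, ← (List.finite_length_eq ι d).coe_toFinset,
    mem_span_image_finset_iff_exists_fun'] at hy
  obtain ⟨l, rfl⟩ := hy
  have hcoeff : ∀ v : List ι, v.length = d →
      linExtₗ θ (∑ w ∈ wordsOfLength ι d, l w • augProd w) v = l v := by
    intro v hv
    rw [map_sum, Finset.sum_apply, sum_congr rfl (g := fun w => if v = w then l w else 0)]
    · simp [hv]
    intro w hw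
    rw [map_smul, Pi.smul_apply, hθ.linExtₗ_augProd_apply (by rw [hv, mem_wordsOfLength.1 hw]),
      smul_eq_mul, mul_ite, mul_one, mul_zero]
  refine sum_smul_augProd_mem_conjugationSpan hd l fun v hv => ?_
  have hv0 : v ≠ [] := by rintro rfl; simp at hv; omega
  rw [← hN v hv, cyclicN_apply_of_ne_nil _ hv0, hv]
  exact sum_congr rfl fun i _ => (hcoeff _ (by rw [List.length_rotate, hv])).symm

lemma IsExpansion.mem_conjugationSpan_sup_augIdealPow_succ [Finite ι] [Algebra ℚ K]
    (hθ : IsExpansion θ) {d : ℕ} (hd : 0 < d) {r : MonoidAlgebra K (FreeGroup ι)}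
    (hr : r ∈ augIdealPow d) (hN : cyclicNₗ (linExtₗ θ r) ∈ filtrationNC (d + 1)) :
    r ∈ conjugationSpan ι K ⊔ augIdealPow (d + 1) := by
  obtain ⟨y, hy, r', hr', rfl⟩ := mem_sup.1 (augIdealPow_le_augProdSpan_sup d hr)
  have hNr' : cyclicNₗ (linExtₗ θ r') ∈ filtrationNC (d + 1) := cyclicN_mem_filtrationNC
    (augIdealPow_le_comap_filtrationNC θ hθ.map_mul hθ.map_one hθ.apply_nil _ hr')
  have hNy : cyclicNₗ (linExtₗ θ y) ∈ filtrationNC (d + 1) := by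
    simpa using sub_mem hN hNr'
  refine add_mem (mem_sup_left ?_) (mem_sup_right hr')
  exact hθ.mem_conjugationSpan_of_cyclicN_eq_zero hd hy fun v hv => hNy v (by omega)

lemma IsExpansion.mem_span_one_sup_conjugationSpan_sup_augIdealPow [Finite ι] [Algebra ℚ K]
    (hθ : IsExpansion θ) {n : ℕ} {u : MonoidAlgebra K (FreeGroup ι)}
    (hu : cyclicNₗ (linExtₗ θ u) ∈ filtrationNC n) {d : ℕ} (hd : 1 ≤ d) (hdn : d ≤ n) :
    u ∈ span K {1} ⊔ conjugationSpan ι K ⊔ augIdealPow d := by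
  induction d, hd using Nat.le_induction with
  | base =>
    obtain ⟨c, hc, r, hr, rfl⟩ := mem_sup.1 (mem_span_one_sup_augIdealPow_one u)
    exact add_mem (mem_sup_left (mem_sup_left hc)) (mem_sup_right hr)
  | succ d hd ih =>
    obtain ⟨a, ha, r, hr, rfl⟩ := mem_sup.1 (ih (by omega))
    have hNr : cyclicNₗ (linExtₗ θ r) ∈ filtrationNC (d + 1) := by
      have ha0 := span_one_sup_conjugationSpan_le_ker θ hθ.map_mul hθ.map_one ha
      rw [LinearMap.mem_ker, LinearMap.comp_apply] at ha0
      rw [map_add, map_add, ha0, zero_add] at hu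
      exact filtrationNC_anti hdn hu
    obtain ⟨s, hs, r', hr', rfl⟩ :=
      mem_sup.1 (hθ.mem_conjugationSpan_sup_augIdealPow_succ hd hr hNr)
    rw [← add_assoc]
    exact add_mem (mem_sup_left (add_mem ha (mem_sup_right hs))) (mem_sup_right hr')

end Expansion

/-- let `θ` be a group-like expansion of a finitely generated
free group `π` and `θ̄ : Kπ → T̂` its linear extension.  For every `n ≥ 1` and
`u ∈ Kπ`, one has `N(θ̄(u)) ∈ N(T̂ₙ)` if and only if `|u| ∈ |K·1 + (Iπ)ⁿ|`,
i.e. iff `u` differs from an element of `K·1 + (Iπ)ⁿ` by an element of the span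
of the `xy − yx`. -/
theorem cyclicN_linExt_mem_iff
    [Fintype ι] [DecidableEq ι] [Algebra ℚ K]
    (θ : FreeGroup ι → NCSeries ι K) (hθ : IsGroupLikeExpansion θ)
    (n : ℕ) (hn : 1 ≤ n) (u : MonoidAlgebra K (FreeGroup ι)) :
    (∃ g : NCSeries ι K, (∀ w : List ι, w.length < n → g w = 0) ∧
        cyclicN (linExt θ u) = cyclicN g) ↔
      (∃ v ∈ Submodule.span K {(1 : MonoidAlgebra K (FreeGroup ι))} ⊔
          augIdealPow (ι := ι) (K := K) n,
        u - v ∈ conjugationSpan ι K) := by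
  have hθ := hθ.isExpansion
  simp only [← linExtₗ_apply, ← cyclicNₗ_apply]
  constructor
  · rintro ⟨g, hg, hNg⟩
    have hu : cyclicNₗ (linExtₗ θ u) ∈ filtrationNC n := hNg ▸ cyclicN_mem_filtrationNC hg
    obtain ⟨a, ha, r, hr, rfl⟩ :=
      Submodule.mem_sup.1 (hθ.mem_span_one_sup_conjugationSpan_sup_augIdealPow hu hn le_rfl)
    obtain ⟨c, hc, s, hs, rfl⟩ := Submodule.mem_sup.1 ha
    exact ⟨c + r, Submodule.add_mem_sup hc hr, by simpa [add_sub_add_comm] using hs⟩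
  · rintro ⟨v, hv, huv⟩
    obtain ⟨c, hc, r, hr, rfl⟩ := Submodule.mem_sup.1 hv
    refine ⟨linExtₗ θ r, augIdealPow_le_comap_filtrationNC θ hθ.map_mul hθ.map_one
      hθ.apply_nil n hr, ?_⟩
    have hur : u - r ∈ Submodule.span K {1} ⊔ conjugationSpan ι K := by
      convert Submodule.add_mem_sup hc huv using 1
      abel
    exact (LinearMap.sub_mem_ker_iff (f := cyclicNₗ ∘ₗ linExtₗ θ)).1
      (span_one_sup_conjugationSpan_le_ker θ hθ.map_mul hθ.map_one hur)
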